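/- arXiv:1903.08068 — 5 statements merged into one kernel-verified Lean document; each statement's English description precedes it below -/
import Mathlib

section
/- In the sum-rate maximization problem for RSMA (maximize ∑_k (a_k + B·log₂(1 + h_k p_k/(h_k ∑_{j≠k} p_j + σ²))) subject to ∑_k a_k ≤ B·log₂(1 + h_1 p_0/(h_1 ∑_j p_j + σ²)), per-user rate demands a_k + r_k ≥ R_k, SIC constraint p_0 − ∑_j p_j ≥ (θ+σ²)/h_1, total power ∑_{k=0}^K p_k ≤ P, and nonnegativity), every optimal solution uses the full power budget: ∑_{k=0}^K p_k* = P. -/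
open Real Finset

/-- Feasibility for the RSMA sum-rate maximization problem (10). Users indexed by
`Fin (K+1)` with user `0` having the weakest channel. `a` are common-message rate
allocations, `p0` the common-message power and `p` the private powers. -/
def RSMAFeasible (K : ℕ) (h : Fin (K + 1) → ℝ) (B σ2 θ P : ℝ)
    (R : Fin (K + 1) → ℝ) (a : Fin (K + 1) → ℝ) (p0 : ℝ)
    (p : Fin (K + 1) → ℝ) : Prop :=
  (∀ k, 0 ≤ a k) ∧ 0 ≤ p0 ∧ (∀ k, 0 ≤ p k) ∧
  (∑ k, a k ≤ B * Real.logb 2 (1 + h 0 * p0 / (h 0 * ∑ j, p j + σ2))) ∧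
  (∀ k, a k + B * Real.logb 2
      (1 + h k * p k / (h k * ∑ j ∈ Finset.univ.erase k, p j + σ2)) ≥ R k) ∧
  (p0 - ∑ j, p j ≥ (θ + σ2) / h 0) ∧
  (p0 + ∑ k, p k ≤ P)

/-- Sum-rate objective of problem (10). -/
noncomputable def RSMAObj (K : ℕ) (h : Fin (K + 1) → ℝ) (B σ2 : ℝ)
    (a : Fin (K + 1) → ℝ) (p : Fin (K + 1) → ℝ) : ℝ :=
  ∑ k, (a k + B * Real.logb 2
      (1 + h k * p k / (h k * ∑ j ∈ Finset.univ.erase k, p j + σ2)))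

lemma frac_le_frac_scale {c d σ2 t : ℝ} (hc : 0 ≤ c) (hd : 0 ≤ d) (hσ : 0 < σ2)
    (ht : 1 ≤ t) : c / (d + σ2) ≤ c * t / (d * t + σ2) := by
  have hden1 : 0 < d + σ2 := by linarith
  have hden2 : 0 < d * t + σ2 := by nlinarith
  rw [div_le_div_iff₀ hden1 hden2]
  nlinarith [mul_nonneg (mul_nonneg hc hσ.le) (by linarith : (0:ℝ) ≤ t - 1)]

lemma frac_lt_frac_scale {c d σ2 t : ℝ} (hc : 0 < c) (hd : 0 ≤ d) (hσ : 0 < σ2)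
    (ht : 1 < t) : c / (d + σ2) < c * t / (d * t + σ2) := by
  have hden1 : 0 < d + σ2 := by linarith
  have hden2 : 0 < d * t + σ2 := by nlinarith
  rw [div_lt_div_iff₀ hden1 hden2]
  nlinarith [mul_pos (mul_pos hc hσ) (by linarith : (0:ℝ) < t - 1)]

/-- Lemma 2: every optimal solution of the RSMA sum-rate
maximization problem uses the full power budget `P`. -/
theorem stmt_2 (K : ℕ) (h : Fin (K + 1) → ℝ) (hpos : ∀ k, 0 < h k)
    (hmono : Monotone h) (B σ2 θ P : ℝ) (hB : 0 < B) (hσ2 : 0 < σ2)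
    (hθ : 0 ≤ θ) (hP : 0 < P) (R : Fin (K + 1) → ℝ) (hR : ∀ k, 0 ≤ R k)
    (a : Fin (K + 1) → ℝ) (p0 : ℝ) (p : Fin (K + 1) → ℝ)
    (hfeas : RSMAFeasible K h B σ2 θ P R a p0 p)
    (hopt : ∀ a' p0' p', RSMAFeasible K h B σ2 θ P R a' p0' p' →
      RSMAObj K h B σ2 a' p' ≤ RSMAObj K h B σ2 a p) :
    p0 + ∑ k, p k = P := by
  obtain ⟨ha, hp0, hp, hcommon, hdem, hsic, hpow⟩ := hfeas
  refine le_antisymm hpow ?_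
  by_contra hlt
  push_neg at hlt
  set S : ℝ := ∑ k, p k with hS
  have hSnn : 0 ≤ S := Finset.sum_nonneg fun k _ => hp k
  have hh0 : 0 < h 0 := hpos 0
  have hp0pos : 0 < p0 := by
    have : 0 < (θ + σ2) / h 0 := div_pos (by linarith) hh0
    linarith [hsic]
  have hTpos : 0 < p0 + S := by linarith
  set t : ℝ := P / (p0 + S) with htdef
  have ht1 : 1 < t := (one_lt_div hTpos).mpr hlt
  have htT : t * (p0 + S) = P := div_mul_cancel₀ P (ne_of_gt hTpos)
  -- scaled sums
  have hsum : ∑ j, t * p j = t * S := by rw [← Finset.mul_sum]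
  have hsumE : ∀ k : Fin (K + 1),
      ∑ j ∈ Finset.univ.erase k, t * p j = t * ∑ j ∈ Finset.univ.erase k, p j := by
    intro k; rw [← Finset.mul_sum]
  have hSk : ∀ k : Fin (K + 1), 0 ≤ ∑ j ∈ Finset.univ.erase k, p j :=
    fun k => Finset.sum_nonneg fun j _ => hp j
  -- log terms: per-user
  have hlog_le : ∀ k : Fin (K + 1),
      Real.logb 2 (1 + h k * p k / (h k * ∑ j ∈ Finset.univ.erase k, p j + σ2)) ≤
      Real.logb 2 (1 + h k * (t * p k) / (h k * ∑ j ∈ Finset.univ.erase k, t * p j + σ2)) := by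
    intro k
    have hc : 0 ≤ h k * p k := mul_nonneg (le_of_lt (hpos k)) (hp k)
    have hd : 0 ≤ h k * ∑ j ∈ Finset.univ.erase k, p j :=
      mul_nonneg (le_of_lt (hpos k)) (hSk k)
    have key := frac_le_frac_scale hc hd hσ2 (le_of_lt ht1)
    have hposarg : (0:ℝ) < 1 + h k * p k / (h k * ∑ j ∈ Finset.univ.erase k, p j + σ2) := by
      have : 0 ≤ h k * p k / (h k * ∑ j ∈ Finset.univ.erase k, p j + σ2) :=
        div_nonneg hc (by linarith)
      linarith
    apply Real.logb_le_logb_of_le (by norm_num : (1:ℝ) < 2) hposarg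
    rw [hsumE k, show h k * (t * p k) = h k * p k * t from by ring,
      show h k * (t * ∑ j ∈ Finset.univ.erase k, p j) =
        h k * (∑ j ∈ Finset.univ.erase k, p j) * t from by ring]
    linarith
  -- common-message bound strictly increases
  set L : ℝ := B * Real.logb 2 (1 + h 0 * p0 / (h 0 * S + σ2)) with hLdef
  set L' : ℝ := B * Real.logb 2 (1 + h 0 * (t * p0) / (h 0 * (t * S) + σ2)) with hL'def
  have hLlt : L < L' := by
    have hc : 0 < h 0 * p0 := mul_pos hh0 hp0pos
    have hd : 0 ≤ h 0 * S := mul_nonneg (le_of_lt hh0) hSnn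
    have key := frac_lt_frac_scale hc hd hσ2 ht1
    have hposarg : (0:ℝ) < 1 + h 0 * p0 / (h 0 * S + σ2) := by
      have : 0 ≤ h 0 * p0 / (h 0 * S + σ2) := div_nonneg (le_of_lt hc) (by linarith)
      linarith
    have harg : 1 + h 0 * p0 / (h 0 * S + σ2) < 1 + h 0 * (t * p0) / (h 0 * (t * S) + σ2) := by
      rw [show h 0 * (t * p0) = h 0 * p0 * t from by ring,
        show h 0 * (t * S) = h 0 * S * t from by ring]
      linarith
    exact (mul_lt_mul_iff_right₀ hB).mpr (Real.logb_lt_logb (by norm_num : (1:ℝ) < 2) hposarg harg)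
  set δ : ℝ := L' - L with hδdef
  have hδpos : 0 < δ := by simp [hδdef]; linarith
  -- new point
  set a' : Fin (K + 1) → ℝ := Function.update a 0 (a 0 + δ) with ha'def
  have hsuma' : ∑ k, a' k = (∑ k, a k) + δ := by
    rw [ha'def, Finset.sum_update_of_mem (Finset.mem_univ 0),
      Finset.sdiff_singleton_eq_erase,
      ← Finset.add_sum_erase _ a (Finset.mem_univ 0)]
    ring
  have hfeas' : RSMAFeasible K h B σ2 θ P R a' (t * p0) (fun k => t * p k) := by
    refine ⟨?_, ?_, ?_, ?_, ?_, ?_, ?_⟩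
    · intro k
      rcases eq_or_ne k 0 with rfl | hk
      · simp [ha'def]; linarith [ha 0]
      · simpa [ha'def, Function.update_of_ne hk] using ha k
    · exact mul_nonneg (by linarith) hp0
    · intro k; exact mul_nonneg (by linarith) (hp k)
    · rw [hsuma', hsum]
      show ∑ k, a k + δ ≤ L'
      linarith
    · intro k
      have h1 : a k ≤ a' k := by
        rcases eq_or_ne k 0 with rfl | hk
        · simp [ha'def]; linarith
        · simp [ha'def, Function.update_of_ne hk]
      have := hdem k
      have := mul_le_mul_of_nonneg_left (hlog_le k) (le_of_lt hB)
      linarith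
    · rw [hsum, ← mul_sub]
      have hsic0 : 0 ≤ p0 - S := le_trans (div_nonneg (by linarith) (le_of_lt hh0)) hsic
      calc (θ + σ2) / h 0 ≤ p0 - S := hsic
        _ ≤ t * (p0 - S) := le_mul_of_one_le_left hsic0 (le_of_lt ht1)
    · rw [hsum]; linarith [htT]
  have hobj := hopt a' (t * p0) (fun k => t * p k) hfeas'
  -- objective strictly increases: contradiction
  have hobjge : RSMAObj K h B σ2 a p + δ ≤ RSMAObj K h B σ2 a' (fun k => t * p k) := by
    unfold RSMAObj
    rw [Finset.sum_add_distrib, Finset.sum_add_distrib, hsuma']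
    have hlogsum : ∑ k, B * Real.logb 2
        (1 + h k * p k / (h k * ∑ j ∈ Finset.univ.erase k, p j + σ2)) ≤
        ∑ k, B * Real.logb 2
        (1 + h k * (t * p k) / (h k * ∑ j ∈ Finset.univ.erase k, t * p j + σ2)) := by
      apply Finset.sum_le_sum
      intro k _
      exact mul_le_mul_of_nonneg_left (hlog_le k) (le_of_lt hB)
    linarith
  linarith
end

section
/- Consider maximizing ∑_{k=1}^K B·log₂((h_k Q + σ²)/(h_k(Q − p_k) + σ²)) over p_1,...,p_K ≥ p_k^min subject to ∑_{k=1}^K p_k = Q, where Q > 0, h_k > 0, σ² > 0, p_k^min ≥ 0, and ∑_k p_k^min ≤ Q. Then at any optimal solution there exists an index k such that p_k = Q − ∑_{j≠k} p_j^min and p_j = p_j^min for all j ≠ k. -/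
open Real Finset

private lemma log_concave_aux (hk Q σ2 x y lam : ℝ) (hhk : 0 < hk)
    (hx : 0 < hk * (Q - x) + σ2) (hy : 0 < hk * (Q - y) + σ2)
    (hlam0 : 0 < lam) (hlam1 : lam < 1) (hxy : x ≠ y) :
    lam * Real.log (hk * (Q - x) + σ2) + (1 - lam) * Real.log (hk * (Q - y) + σ2)
      < Real.log (hk * (Q - (lam * x + (1 - lam) * y)) + σ2) := by
  have hU : hk * (Q - (lam * x + (1 - lam) * y)) + σ2
      = lam * (hk * (Q - x) + σ2) + (1 - lam) * (hk * (Q - y) + σ2) := by ring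
  rw [hU]
  have hne : hk * (Q - x) + σ2 ≠ hk * (Q - y) + σ2 := by
    intro hEq
    apply hxy
    have hxx : hk * x = hk * y := by linear_combination -hEq
    exact mul_left_cancel₀ hhk.ne' hxx
  have := strictConcaveOn_log_Ioi.2 (Set.mem_Ioi.mpr hx) (Set.mem_Ioi.mpr hy) hne
    hlam0 (show (0:ℝ) < 1 - lam by linarith) (show lam + (1 - lam) = 1 by ring)
  simpa using this

private lemma G_convex_lt (B hk Q σ2 x y lam : ℝ) (hB : 0 < B) (hhk : 0 < hk) (hQ : 0 < Q)
    (hσ2 : 0 < σ2)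
    (hx : 0 < hk * (Q - x) + σ2) (hy : 0 < hk * (Q - y) + σ2)
    (hlam0 : 0 < lam) (hlam1 : lam < 1) (hxy : x ≠ y) :
    B * Real.logb 2 ((hk * Q + σ2) / (hk * (Q - (lam * x + (1 - lam) * y)) + σ2))
      < lam * (B * Real.logb 2 ((hk * Q + σ2) / (hk * (Q - x) + σ2)))
        + (1 - lam) * (B * Real.logb 2 ((hk * Q + σ2) / (hk * (Q - y) + σ2))) := by
  have hA : 0 < hk * Q + σ2 := by positivity
  have hm : 0 < hk * (Q - (lam * x + (1 - lam) * y)) + σ2 := by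
    have hU : hk * (Q - (lam * x + (1 - lam) * y)) + σ2
        = lam * (hk * (Q - x) + σ2) + (1 - lam) * (hk * (Q - y) + σ2) := by ring
    rw [hU]
    have := mul_pos hlam0 hx
    have := mul_pos (by linarith : (0:ℝ) < 1 - lam) hy
    linarith
  have h2 : (0:ℝ) < Real.log 2 := Real.log_pos one_lt_two
  have e : ∀ u : ℝ, 0 < u →
      Real.logb 2 ((hk * Q + σ2) / u) = (Real.log (hk * Q + σ2) - Real.log u) / Real.log 2 := by
    intro u hu
    rw [Real.logb, Real.log_div hA.ne' hu.ne']
  rw [e _ hm, e _ hx, e _ hy]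
  have key := log_concave_aux hk Q σ2 x y lam hhk hx hy hlam0 hlam1 hxy
  have hBL : 0 < B / Real.log 2 := div_pos hB h2
  set LA := Real.log (hk * Q + σ2)
  set Lx := Real.log (hk * (Q - x) + σ2)
  set Ly := Real.log (hk * (Q - y) + σ2)
  set Lm := Real.log (hk * (Q - (lam * x + (1 - lam) * y)) + σ2)
  have h3 : LA - Lm < lam * (LA - Lx) + (1 - lam) * (LA - Ly) := by nlinarith [key]
  calc B * ((LA - Lm) / Real.log 2) = (B / Real.log 2) * (LA - Lm) := by ring
    _ < (B / Real.log 2) * (lam * (LA - Lx) + (1 - lam) * (LA - Ly)) :=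
        mul_lt_mul_of_pos_left h3 hBL
    _ = lam * (B * ((LA - Lx) / Real.log 2)) + (1 - lam) * (B * ((LA - Ly) / Real.log 2)) := by
        ring

private lemma G_convex_le (B hk Q σ2 x y lam : ℝ) (hB : 0 < B) (hhk : 0 < hk) (hQ : 0 < Q)
    (hσ2 : 0 < σ2)
    (hx : 0 < hk * (Q - x) + σ2) (hy : 0 < hk * (Q - y) + σ2)
    (hlam0 : 0 < lam) (hlam1 : lam < 1) :
    B * Real.logb 2 ((hk * Q + σ2) / (hk * (Q - (lam * x + (1 - lam) * y)) + σ2))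
      ≤ lam * (B * Real.logb 2 ((hk * Q + σ2) / (hk * (Q - x) + σ2)))
        + (1 - lam) * (B * Real.logb 2 ((hk * Q + σ2) / (hk * (Q - y) + σ2))) := by
  rcases eq_or_ne x y with rfl | hxy
  · have hx' : lam * x + (1 - lam) * x = x := by ring
    rw [hx']
    exact le_of_eq (by ring)
  · exact (G_convex_lt B hk Q σ2 x y lam hB hhk hQ hσ2 hx hy hlam0 hlam1 hxy).le

/-- Theorem 1: in the private-power allocation problem
(maximize `∑ₖ B·log₂((hₖQ+σ²)/(hₖ(Q−pₖ)+σ²))` over `p ≥ pmin` with `∑ₖ pₖ = Q`),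
at any optimal solution there is one index `k` receiving all the slack power,
`p k = Q − ∑_{j≠k} pmin j`, while every other user gets its minimum power. -/
theorem stmt_4 (K : ℕ) (Q σ2 B : ℝ) (hQ : 0 < Q) (hσ2 : 0 < σ2) (hB : 0 < B)
    (h : Fin K → ℝ) (hpos : ∀ k, 0 < h k)
    (pmin : Fin K → ℝ) (hpmin : ∀ k, 0 ≤ pmin k) (hfeas : ∑ k, pmin k ≤ Q)
    (p : Fin K → ℝ) (hge : ∀ k, pmin k ≤ p k) (hsum : ∑ k, p k = Q)
    (hopt : ∀ q : Fin K → ℝ, (∀ k, pmin k ≤ q k) → ∑ k, q k = Q →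
      ∑ k, B * Real.logb 2 ((h k * Q + σ2) / (h k * (Q - q k) + σ2)) ≤
        ∑ k, B * Real.logb 2 ((h k * Q + σ2) / (h k * (Q - p k) + σ2))) :
    ∃ k, p k = Q - ∑ j ∈ Finset.univ.erase k, pmin j ∧
      ∀ j, j ≠ k → p j = pmin j := by
  have hpQ : ∀ r : Fin K → ℝ, (∀ k, pmin k ≤ r k) → ∑ k, r k = Q → ∀ k, r k ≤ Q := by
    intro r h1 h2 k
    calc r k ≤ ∑ j, r j :=
          Finset.single_le_sum (fun j _ => (hpmin j).trans (h1 j)) (Finset.mem_univ k)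
      _ = Q := h2
  have hUpos : ∀ r : Fin K → ℝ, (∀ k, pmin k ≤ r k) → ∑ k, r k = Q →
      ∀ k, 0 < h k * (Q - r k) + σ2 := by
    intro r h1 h2 k
    have h3 := hpQ r h1 h2 k
    have h4 : 0 ≤ h k * (Q - r k) := mul_nonneg (hpos k).le (by linarith)
    linarith
  suffices hS : ∃ k, ∀ j, j ≠ k → p j = pmin j by
    obtain ⟨k, hk⟩ := hS
    refine ⟨k, ?_, hk⟩
    have hQ' : p k + ∑ j ∈ Finset.univ.erase k, p j = Q := by
      rw [Finset.add_sum_erase _ p (Finset.mem_univ k)]; exact hsum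
    have h2 : ∑ j ∈ Finset.univ.erase k, p j = ∑ j ∈ Finset.univ.erase k, pmin j :=
      Finset.sum_congr rfl (fun j hj => hk j (Finset.ne_of_mem_erase hj))
    linarith
  by_contra hcon
  push_neg at hcon
  have hK : 0 < K := by
    rcases Nat.eq_zero_or_pos K with h0 | h0
    · subst h0; simp at hsum; linarith
    · exact h0
  obtain ⟨j, hjne0, hj⟩ := hcon ⟨0, hK⟩
  obtain ⟨i, hij, hi⟩ := hcon j
  have hpi : pmin i < p i := lt_of_le_of_ne (hge i) (Ne.symm hi)
  have hpj : pmin j < p j := lt_of_le_of_ne (hge j) (Ne.symm hj)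
  set a := p i - pmin i with ha
  set b := p j - pmin j with hb
  have ha0 : 0 < a := by simp [ha]; linarith
  have hb0 : 0 < b := by simp [hb]; linarith
  have hab : 0 < a + b := by linarith
  set lam := b / (a + b) with hlam
  have hlam0 : 0 < lam := div_pos hb0 hab
  have hlam1 : lam < 1 := by rw [hlam, div_lt_one hab]; linarith
  have hlamab : lam * (a + b) = b := div_mul_cancel₀ b hab.ne'
  set q1 := Function.update (Function.update p i (pmin i)) j (p j + a) with hq1
  set q2 := Function.update (Function.update p j (pmin j)) i (p i + b) with hq2
  have hq1j : q1 j = p j + a := by simp [hq1]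
  have hq1i : q1 i = pmin i := by simp [hq1, Function.update_apply, hij]
  have hq1k : ∀ k, k ≠ i → k ≠ j → q1 k = p k := by
    intro k hki hkj; simp [hq1, Function.update_apply, hki, hkj]
  have hq2i : q2 i = p i + b := by simp [hq2]
  have hq2j : q2 j = pmin j := by simp [hq2, Function.update_apply, hij.symm]
  have hq2k : ∀ k, k ≠ i → k ≠ j → q2 k = p k := by
    intro k hki hkj; simp [hq2, Function.update_apply, hki, hkj]
  have hiej : i ∈ Finset.univ.erase j := Finset.mem_erase.2 ⟨hij, Finset.mem_univ i⟩
  have hjei : j ∈ Finset.univ.erase i := Finset.mem_erase.2 ⟨hij.symm, Finset.mem_univ j⟩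
  have hsum' : p j + (p i + ∑ x ∈ (Finset.univ.erase j).erase i, p x) = Q := by
    rw [Finset.add_sum_erase _ p hiej, Finset.add_sum_erase _ p (Finset.mem_univ j)]
    exact hsum
  have hs1 : ∑ k, q1 k = Q := by
    rw [hq1, Finset.sum_update_of_mem (Finset.mem_univ j),
      Finset.sum_update_of_mem (by simpa [← Finset.erase_eq] using hiej :
        i ∈ (Finset.univ : Finset (Fin K)) \ {j})]
    simp only [Finset.erase_eq] at hsum'
    linarith
  have hsum'' : p i + (p j + ∑ x ∈ (Finset.univ.erase i).erase j, p x) = Q := by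
    rw [Finset.add_sum_erase _ p hjei, Finset.add_sum_erase _ p (Finset.mem_univ i)]
    exact hsum
  have hs2 : ∑ k, q2 k = Q := by
    rw [hq2, Finset.sum_update_of_mem (Finset.mem_univ i),
      Finset.sum_update_of_mem (by simpa [← Finset.erase_eq] using hjei :
        j ∈ (Finset.univ : Finset (Fin K)) \ {i})]
    simp only [Finset.erase_eq] at hsum''
    linarith
  have hf1 : ∀ k, pmin k ≤ q1 k := by
    intro k
    rcases eq_or_ne k j with rfl | hkj
    · rw [hq1j]; linarith [hge k]
    rcases eq_or_ne k i with rfl | hki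
    · rw [hq1i]
    · rw [hq1k k hki hkj]; exact hge k
  have hf2 : ∀ k, pmin k ≤ q2 k := by
    intro k
    rcases eq_or_ne k i with rfl | hki
    · rw [hq2i]; linarith [hge k]
    rcases eq_or_ne k j with rfl | hkj
    · rw [hq2j]
    · rw [hq2k k hki hkj]; exact hge k
  have hU1 := hUpos q1 hf1 hs1
  have hU2 := hUpos q2 hf2 hs2
  have hcomb : ∀ k, p k = lam * q1 k + (1 - lam) * q2 k := by
    intro k
    rcases eq_or_ne k i with rfl | hki
    · rw [hq1i, hq2i]
      have hpm : pmin k = p k - a := by simp [ha]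
      rw [hpm]
      linear_combination hlamab
    rcases eq_or_ne k j with rfl | hkj
    · rw [hq1j, hq2j]
      have hpm : pmin k = p k - b := by simp [hb]
      rw [hpm]
      linear_combination -hlamab
    · rw [hq1k k hki hkj, hq2k k hki hkj]; ring
  have hne12 : q1 i ≠ q2 i := by
    rw [hq1i, hq2i]
    intro hEq
    have : (0:ℝ) < b := hb0
    nlinarith [hpi]
  have hFp_lt : (∑ k, B * Real.logb 2 ((h k * Q + σ2) / (h k * (Q - p k) + σ2)))
      < ∑ k, (lam * (B * Real.logb 2 ((h k * Q + σ2) / (h k * (Q - q1 k) + σ2)))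
          + (1 - lam) * (B * Real.logb 2 ((h k * Q + σ2) / (h k * (Q - q2 k) + σ2)))) := by
    apply Finset.sum_lt_sum
    · intro k _
      have hle := G_convex_le B (h k) Q σ2 (q1 k) (q2 k) lam hB (hpos k) hQ hσ2
        (hU1 k) (hU2 k) hlam0 hlam1
      rw [← hcomb k] at hle
      exact hle
    · refine ⟨i, Finset.mem_univ i, ?_⟩
      have hlt := G_convex_lt B (h i) Q σ2 (q1 i) (q2 i) lam hB (hpos i) hQ hσ2
        (hU1 i) (hU2 i) hlam0 hlam1 hne12
      rw [← hcomb i] at hlt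
      exact hlt
  have hsplit : ∑ k, (lam * (B * Real.logb 2 ((h k * Q + σ2) / (h k * (Q - q1 k) + σ2)))
          + (1 - lam) * (B * Real.logb 2 ((h k * Q + σ2) / (h k * (Q - q2 k) + σ2))))
      = lam * ∑ k, B * Real.logb 2 ((h k * Q + σ2) / (h k * (Q - q1 k) + σ2))
        + (1 - lam) * ∑ k, B * Real.logb 2 ((h k * Q + σ2) / (h k * (Q - q2 k) + σ2)) := by
    rw [Finset.sum_add_distrib, Finset.mul_sum, Finset.mul_sum]
  rw [hsplit] at hFp_lt
  have h1 := hopt q1 hf1 hs1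
  have h2 := hopt q2 hf2 hs2
  have h1' := mul_le_mul_of_nonneg_left h1 hlam0.le
  have h2' := mul_le_mul_of_nonneg_left h2 (by linarith : (0:ℝ) ≤ 1 - lam)
  nlinarith [hFp_lt, h1', h2']
end

section
/- In the two-variable power reallocation problem: maximize B·log₂((h_m Q + σ²)/(h_m(Q − p_m) + σ²)) + B·log₂((h_n Q + σ²)/(h_n(Q − p_n) + σ²)) subject to p_m + p_n = C, p_m ≥ L_m, p_n ≥ L_n (with L_m + L_n ≤ C ≤ Q), every optimal solution satisfies p_m = L_m or p_n = L_n. -/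
/-!
Along the line `p_m + p_n = C` the objective is a decreasing function of the product of the two
denominators `(h_m (Q - p_m) + σ²) (h_n (Q - p_n) + σ²)`, and this product is a strictly concave
quadratic in `p_m`. A strictly concave function on `[L_m, C - L_n]` is, at every interior point,
strictly above its value at one of the endpoints, so an interior point cannot be optimal.
-/

open Real Set

theorem strictConcaveOn_mul_affine {α β γ δ : ℝ} (hβδ : β * δ < 0) :
    StrictConcaveOn ℝ univ fun p => (α + β * p) * (γ + δ * p) := by
  refine ⟨convex_univ, fun x _ y _ hxy a b ha hb hab => ?_⟩
  obtain rfl : b = 1 - a := by linarith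
  have hgap : 0 < -(β * δ) * (a * (1 - a) * (x - y) ^ 2) :=
    mul_pos (neg_pos.2 hβδ) (by have := sub_ne_zero.2 hxy; positivity)
  simp only [smul_eq_mul]
  linear_combination hgap

theorem mul_logb_div_add_mul_logb_div_lt {B A A' x y u v : ℝ} (hB : 0 < B) (hA : A ≠ 0)
    (hA' : A' ≠ 0) (hx : 0 < x) (hy : 0 < y) (hu : 0 < u) (hv : 0 < v) (h : u * v < x * y) :
    B * logb 2 (A / x) + B * logb 2 (A' / y) < B * logb 2 (A / u) + B * logb 2 (A' / v) := by
  have hlog : logb 2 (u * v) < logb 2 (x * y) := logb_lt_logb one_lt_two (by positivity) h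
  rw [logb_mul hu.ne' hv.ne', logb_mul hx.ne' hy.ne'] at hlog
  simp only [logb_div hA hx.ne', logb_div hA hu.ne', logb_div hA' hy.ne', logb_div hA' hv.ne']
  rw [← mul_add, ← mul_add]
  exact mul_lt_mul_of_pos_left (by linarith) hB

theorem stmt_6_general (B hm hn σ2 Q Lm Ln C : ℝ) (hB : 0 < B) (hhm : 0 < hm)
    (hhn : 0 < hn) (hσ2 : 0 < σ2) (hQ : 0 < Q) (hLm : 0 ≤ Lm) (hLn : 0 ≤ Ln)
    (hC2 : C ≤ Q)
    (pm pn : ℝ) (hpm : Lm ≤ pm) (hpn : Ln ≤ pn) (hsum : pm + pn = C)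
    (hopt : ∀ qm qn : ℝ, Lm ≤ qm → Ln ≤ qn → qm + qn = C →
      B * Real.logb 2 ((hm * Q + σ2) / (hm * (Q - qm) + σ2)) +
          B * Real.logb 2 ((hn * Q + σ2) / (hn * (Q - qn) + σ2)) ≤
        B * Real.logb 2 ((hm * Q + σ2) / (hm * (Q - pm) + σ2)) +
          B * Real.logb 2 ((hn * Q + σ2) / (hn * (Q - pn) + σ2))) :
    pm = Lm ∨ pn = Ln := by
  by_contra! hne
  obtain rfl : pn = C - pm := by linarith
  have hpm' : pm ∈ Ioo Lm (C - Ln) := ⟨hpm.lt_of_ne' hne.1, by linarith [hpn.lt_of_ne' hne.2]⟩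
  set D : ℝ → ℝ := fun p => (hm * (Q - p) + σ2) * (hn * (Q - (C - p)) + σ2)
  have hD : StrictConcaveOn ℝ univ D :=
    (strictConcaveOn_mul_affine (α := hm * Q + σ2) (β := -hm) (γ := hn * (Q - C) + σ2) (δ := hn)
      (by nlinarith)).congr fun p _ => by simp only [D]; ring
  have hden : ∀ {h t : ℝ}, 0 < h → t ≤ Q → 0 < h * (Q - t) + σ2 := fun hh ht =>
    add_pos_of_nonneg_of_pos (mul_nonneg hh.le (sub_nonneg.2 ht)) hσ2
  have hbetter : ∀ q, Lm ≤ q → q ≤ C - Ln → ¬ D q < D pm := fun q hLq hqC hq =>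
    (hopt q (C - q) hLq (by linarith) (by ring)).not_gt <|
      mul_logb_div_add_mul_logb_div_lt hB (by positivity) (by positivity)
        (hden hhm (by linarith)) (hden hhn (by linarith)) (hden hhm (by linarith))
        (hden hhn (by linarith)) hq
  have hlt := hD.lt_on_openSegment (mem_univ Lm) (mem_univ (C - Ln)) (hpm'.1.trans hpm'.2).ne
    (Ioo_subset_openSegment hpm')
  rcases min_lt_iff.1 hlt with hL | hR
  · exact hbetter Lm le_rfl (by linarith) hL
  · exact hbetter (C - Ln) (by linarith) le_rfl hR

/-- problem (C.1): reallocating power between two users with a fixed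
total `C`, every optimal pair `(p_m, p_n)` has at least one power at its lower bound. -/
theorem stmt_6 (B hm hn σ2 Q Lm Ln C : ℝ) (hB : 0 < B) (hhm : 0 < hm)
    (hhn : 0 < hn) (hσ2 : 0 < σ2) (hQ : 0 < Q) (hLm : 0 ≤ Lm) (hLn : 0 ≤ Ln)
    (hC1 : Lm + Ln ≤ C) (hC2 : C ≤ Q)
    (pm pn : ℝ) (hpm : Lm ≤ pm) (hpn : Ln ≤ pn) (hsum : pm + pn = C)
    (hopt : ∀ qm qn : ℝ, Lm ≤ qm → Ln ≤ qn → qm + qn = C →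
      B * Real.logb 2 ((hm * Q + σ2) / (hm * (Q - qm) + σ2)) +
          B * Real.logb 2 ((hn * Q + σ2) / (hn * (Q - qn) + σ2)) ≤
        B * Real.logb 2 ((hm * Q + σ2) / (hm * (Q - pm) + σ2)) +
          B * Real.logb 2 ((hn * Q + σ2) / (hn * (Q - pn) + σ2))) :
    pm = Lm ∨ pn = Ln :=
  stmt_6_general B hm hn σ2 Q Lm Ln C hB hhm hhn hσ2 hQ hLm hLn hC2 pm pn hpm hpn hsum hopt
end

section
/- The function f(a) = ∑_{j≠k}(R_j − a_j) + B·log₂((Q + σ²/h_k)/(∑_{j≠k}(1 − 2^{(a_j−R_j)/B})(Q + σ²/h_j) + σ²/h_k)) is convex in a = (a_1,...,a_K) on the region where the denominator is positive. -/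
/-!
The denominator `g(a) = ∑_{j≠k} (1 - 2^{(aⱼ-Rⱼ)/B}) (Q + σ²/hⱼ) + σ²/h_k` is concave, being a
sum of nonnegative multiples of `1 - (convex exponential of an affine function)`. Hence its
positivity region is convex and `log ∘ g` is concave there, as `log` is concave and increasing.
Since `B · log₂ (c / g) = B · log₂ c - (B / log 2) · log g`, the objective is an affine function
minus a nonnegative multiple of a concave one.
-/

open Real Finset

section FinsetSum

variable {𝕜 E β ι : Type*} [Semiring 𝕜] [PartialOrder 𝕜] [AddCommMonoid E] [SMul 𝕜 E]
  [AddCommMonoid β] [PartialOrder β] [IsOrderedAddMonoid β] [Module 𝕜 β] {s : Set E}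

theorem ConvexOn.sum {t : Finset ι} {f : ι → E → β} (hs : Convex 𝕜 s)
    (hf : ∀ i ∈ t, ConvexOn 𝕜 s (f i)) : ConvexOn 𝕜 s fun x => ∑ i ∈ t, f i x := by
  classical
  induction t using Finset.induction_on with
  | empty => simpa using convexOn_const (0 : β) hs
  | insert i t hi ih =>
    simp only [sum_insert hi]
    exact (hf i (mem_insert_self i t)).add (ih fun j hj => hf j (mem_insert_of_mem hj))

theorem ConcaveOn.sum {t : Finset ι} {f : ι → E → β} (hs : Convex 𝕜 s)
    (hf : ∀ i ∈ t, ConcaveOn 𝕜 s (f i)) : ConcaveOn 𝕜 s fun x => ∑ i ∈ t, f i x :=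
  ConvexOn.sum (β := βᵒᵈ) hs hf

end FinsetSum

theorem ConcaveOn.log_comp {E : Type*} [AddCommMonoid E] [Module ℝ E] {s : Set E} {g : E → ℝ}
    (hg : ConcaveOn ℝ s g) : ConcaveOn ℝ {x ∈ s | 0 < g x} fun x => log (g x) := by
  refine ⟨hg.convex_gt 0, fun x hx y hy a b ha hb hab => ?_⟩
  have hcomb_pos : a • g x + b • g y ∈ Set.Ioi 0 := convex_Ioi 0 hx.2 hy.2 ha hb hab
  calc a • log (g x) + b • log (g y) ≤ log (a • g x + b • g y) :=
        strictConcaveOn_log_Ioi.concaveOn.2 hx.2 hy.2 ha hb hab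
    _ ≤ log (g (a • x + b • y)) := log_le_log hcomb_pos (hg.2 hx.1 hy.1 ha hb hab)

theorem convexOn_rpow_apply_sub_div {ι : Type*} {b : ℝ} (hb : 0 < b) (r B : ℝ) (j : ι) :
    ConvexOn ℝ Set.univ fun a : ι → ℝ => b ^ ((a j - r) / B) := by
  refine ⟨convex_univ, fun x _ y _ p q hp hq hpq => ?_⟩
  have hexp : ((p • x + q • y) j - r) / B = p • ((x j - r) / B) + q • ((y j - r) / B) := by
    simp only [Pi.add_apply, Pi.smul_apply, smul_eq_mul]
    linear_combination (r / B) * hpq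
  simpa only [hexp] using (convexOn_rpow_left hb).2 trivial trivial hp hq hpq

theorem concaveOn_sum_one_sub_rpow_mul_add {ι : Type*} (t : Finset ι) {b : ℝ} (hb : 0 < b)
    (r c : ι → ℝ) (hc : ∀ j ∈ t, 0 ≤ c j) (B d : ℝ) :
    ConcaveOn ℝ Set.univ fun a : ι → ℝ => ∑ j ∈ t, (1 - b ^ ((a j - r j) / B)) * c j + d := by
  refine (ConcaveOn.sum convex_univ fun j hj => ?_).add_const d
  refine (((concaveOn_const 1 convex_univ).sub
    (convexOn_rpow_apply_sub_div hb (r j) B j)).smul (hc j hj)).congr fun a _ => ?_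
  simp only [Pi.sub_apply, smul_eq_mul, mul_comm]

/-- Lemma 4: the rate-allocation objective
`f(a) = ∑_{j≠k}(Rⱼ − aⱼ) + B·log₂((Q+σ²/h_k)/(∑_{j≠k}(1−2^{(aⱼ−Rⱼ)/B})(Q+σ²/hⱼ)+σ²/h_k))`
is convex on the region where the denominator is positive. -/
theorem stmt_10 (K : ℕ) (Q σ2 B : ℝ) (hQ : 0 < Q) (hσ2 : 0 < σ2) (hB : 0 < B)
    (h : Fin K → ℝ) (hpos : ∀ j, 0 < h j) (R : Fin K → ℝ) (k : Fin K) :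
    ConvexOn ℝ
      {a : Fin K → ℝ |
        0 < ∑ j ∈ Finset.univ.erase k,
              (1 - (2:ℝ) ^ ((a j - R j) / B)) * (Q + σ2 / h j) + σ2 / h k}
      (fun a =>
        (∑ j ∈ Finset.univ.erase k, (R j - a j)) +
          B * Real.logb 2 ((Q + σ2 / h k) /
            (∑ j ∈ Finset.univ.erase k,
                (1 - (2:ℝ) ^ ((a j - R j) / B)) * (Q + σ2 / h j) + σ2 / h k))) := by
  have hc : ∀ j, 0 < Q + σ2 / h j := fun j => by have := hpos j; positivity
  have hg := concaveOn_sum_one_sub_rpow_mul_add (univ.erase k) two_pos R (fun j => Q + σ2 / h j)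
    (fun j _ => (hc j).le) B (σ2 / h k)
  have hlin : ConvexOn ℝ Set.univ fun a : Fin K → ℝ => ∑ j ∈ univ.erase k, (R j - a j) :=
    ConvexOn.sum convex_univ fun j _ =>
      (convexOn_const (R j) convex_univ).sub ((LinearMap.proj j).concaveOn convex_univ)
  have hF := ((hlin.subset (Set.subset_univ _) (hg.convex_gt 0)).add_const
    (B * logb 2 (Q + σ2 / h k))).sub (hg.log_comp.smul (div_nonneg hB.le (log_nonneg one_le_two)))
  rw [Set.sep_univ] at hF
  refine hF.congr fun a ha => ?_
  simp only [Pi.sub_apply, Pi.add_apply, smul_eq_mul]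
  rw [logb_div (hc k).ne' (ne_of_gt ha)]
  simp only [logb]
  ring
end

section
/- Under equal rate demands R and feasibility constraints ∑_j a_j ≤ c_1, 0 ≤ a_j ≤ R, the partial derivative of f(a) = ∑_{j≠k}(R − a_j) + B·log₂((Q+σ²/h_k)/(∑_{j≠k}(1−2^{(a_j−R)/B})(Q+σ²/h_j)+σ²/h_k)) with respect to a_j (j ≠ k) is nonnegative, provided k = argmin_j 2^{(a_j−R)/B}(Q+σ²/h_j) and ∑_{j=1}^K (1−2^{(a_j−R)/B})(Q+σ²/h_j) ≤ Q. -/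
open Real Finset

/-- eq. (F.2): under equal rate demands `R` and the feasibility
constraints, the partial derivative of the objective with respect to `aⱼ`
(`j ≠ k`), namely `−1 + 2^{(aⱼ−R)/B}(Q+σ²/hⱼ)/D` with
`D = ∑_{i≠k}(1−2^{(aᵢ−R)/B})(Q+σ²/hᵢ)+σ²/h_k`, is nonnegative, provided `k`
minimizes `2^{(aᵢ−R)/B}(Q+σ²/hᵢ)` and `∑ᵢ(1−2^{(aᵢ−R)/B})(Q+σ²/hᵢ) ≤ Q`. -/
theorem stmt_14 (K : ℕ) (Q σ2 B R c1 : ℝ) (hQ : 0 < Q) (hσ2 : 0 < σ2)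
    (hB : 0 < B) (h : Fin K → ℝ) (hpos : ∀ j, 0 < h j)
    (a : Fin K → ℝ) (ha0 : ∀ j, 0 ≤ a j) (haR : ∀ j, a j ≤ R)
    (hc1 : ∑ j, a j ≤ c1) (k : Fin K)
    (hargmin : ∀ m, (2:ℝ) ^ ((a k - R) / B) * (Q + σ2 / h k) ≤
      (2:ℝ) ^ ((a m - R) / B) * (Q + σ2 / h m))
    (hfeas : ∑ j, (1 - (2:ℝ) ^ ((a j - R) / B)) * (Q + σ2 / h j) ≤ Q) :
    ∀ j, j ≠ k →
      0 ≤ -1 + (2:ℝ) ^ ((a j - R) / B) * (Q + σ2 / h j) /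
        (∑ i ∈ Finset.univ.erase k,
            (1 - (2:ℝ) ^ ((a i - R) / B)) * (Q + σ2 / h i) + σ2 / h k) := by
  intro j hj
  set t : Fin K → ℝ := fun i => (2:ℝ) ^ ((a i - R) / B) with ht
  have htpos : ∀ i, 0 < t i := fun i => Real.rpow_pos_of_pos (by norm_num) _
  have ht1 : ∀ i, t i ≤ 1 := fun i =>
    Real.rpow_le_one_of_one_le_of_nonpos (by norm_num)
      (div_nonpos_of_nonpos_of_nonneg (by linarith [haR i]) hB.le)
  have hQh : ∀ i, 0 < Q + σ2 / h i := fun i =>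
    add_pos hQ (div_pos hσ2 (hpos i))
  set D : ℝ := ∑ i ∈ Finset.univ.erase k,
      (1 - t i) * (Q + σ2 / h i) + σ2 / h k with hD
  have hsum_nonneg : 0 ≤ ∑ i ∈ Finset.univ.erase k, (1 - t i) * (Q + σ2 / h i) :=
    Finset.sum_nonneg fun i _ => mul_nonneg (by linarith [ht1 i]) (hQh i).le
  have hDpos : 0 < D := by
    have := div_pos hσ2 (hpos k)
    simp only [hD]; linarith
  -- split the full sum
  have hsplit : ∑ i ∈ Finset.univ.erase k, (1 - t i) * (Q + σ2 / h i)
      + (1 - t k) * (Q + σ2 / h k)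
      = ∑ i, (1 - t i) * (Q + σ2 / h i) :=
    Finset.sum_erase_add _ _ (Finset.mem_univ k)
  have hDle : D ≤ t k * (Q + σ2 / h k) := by
    have : ∑ i ∈ Finset.univ.erase k, (1 - t i) * (Q + σ2 / h i)
        ≤ Q - (1 - t k) * (Q + σ2 / h k) := by linarith [hfeas, hsplit]
    have : D ≤ Q + σ2 / h k - (1 - t k) * (Q + σ2 / h k) := by
      simp only [hD]; linarith
    linarith [this, (by ring : Q + σ2 / h k - (1 - t k) * (Q + σ2 / h k)
      = t k * (Q + σ2 / h k))]
  have hnum : D ≤ t j * (Q + σ2 / h j) := hDle.trans (hargmin j)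
  have : 1 ≤ t j * (Q + σ2 / h j) / D := (one_le_div hDpos).mpr hnum
  linarith
end
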